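/- arXiv:0810.1853 — 2 statements merged into one kernel-verified Lean document; each statement's English description precedes it below -/
import Mathlib

section
/- Let J_n ∈ gl_n(ℝ) be the regular nilpotent Jordan block (ones on the superdiagonal, zeros elsewhere), and let d(J_n) = diag(J_n, J_nᵀ) ∈ gl_{2n}(ℝ). Suppose Y ∈ gl_{2n}(ℝ) satisfies: (i) J Yᵀ J⁻¹ = Y (i.e. Y ∈ g^σ), (ii) Y commutes with d(J_n), and (iii) tr(Y) = 0. Then Y is nilpotent. -/
open Matrix

noncomputable def Jmat (n : ℕ) : Matrix (Fin n ⊕ Fin n) (Fin n ⊕ Fin n) ℝ :=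
  Matrix.fromBlocks 0 1 (-1) 0

noncomputable def dmat (n : ℕ) (X : Matrix (Fin n) (Fin n) ℝ) :
    Matrix (Fin n ⊕ Fin n) (Fin n ⊕ Fin n) ℝ :=
  Matrix.fromBlocks X 0 0 Xᵀ

/-- The regular nilpotent Jordan block: ones on the superdiagonal. -/
noncomputable def jordanBlock (n : ℕ) : Matrix (Fin n) (Fin n) ℝ :=
  Matrix.of fun i j => if (i : ℕ) + 1 = (j : ℕ) then 1 else 0

section helpers
variable {n : ℕ}

lemma mul_jordan (M : Matrix (Fin n) (Fin n) ℝ) (i j : Fin n) :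
    (M * jordanBlock n) i j =
      if h : 0 < (j : ℕ) then M i ⟨(j : ℕ) - 1, by omega⟩ else 0 := by
  rw [Matrix.mul_apply]
  split
  · next h =>
    rw [Finset.sum_eq_single (⟨(j : ℕ) - 1, by omega⟩ : Fin n)]
    · simp only [jordanBlock, Matrix.of_apply]
      rw [if_pos (by omega), mul_one]
    · intro k _ hk
      simp only [jordanBlock, Matrix.of_apply]
      rw [if_neg, mul_zero]
      intro hkj
      exact hk (Fin.ext (by simp; omega))
    · intro hmem; exact absurd (Finset.mem_univ _) hmem
  · next h =>
    apply Finset.sum_eq_zero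
    intro k _
    simp only [jordanBlock, Matrix.of_apply]
    rw [if_neg (by omega), mul_zero]

lemma jordan_mul (M : Matrix (Fin n) (Fin n) ℝ) (i j : Fin n) :
    (jordanBlock n * M) i j =
      if h : (i : ℕ) + 1 < n then M ⟨(i : ℕ) + 1, h⟩ j else 0 := by
  rw [Matrix.mul_apply]
  split
  · next h =>
    rw [Finset.sum_eq_single (⟨(i : ℕ) + 1, h⟩ : Fin n)]
    · simp only [jordanBlock, Matrix.of_apply]
      rw [if_pos (by simp), one_mul]
    · intro k _ hk
      simp only [jordanBlock, Matrix.of_apply]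
      rw [if_neg, zero_mul]
      intro hkj
      exact hk (Fin.ext (by simp; omega))
    · intro hmem; exact absurd (Finset.mem_univ _) hmem
  · next h =>
    apply Finset.sum_eq_zero
    intro k _
    have := k.isLt
    simp only [jordanBlock, Matrix.of_apply]
    rw [if_neg (by omega), zero_mul]

lemma mul_jordanT (M : Matrix (Fin n) (Fin n) ℝ) (i j : Fin n) :
    (M * (jordanBlock n)ᵀ) i j =
      if h : (j : ℕ) + 1 < n then M i ⟨(j : ℕ) + 1, h⟩ else 0 := by
  rw [Matrix.mul_apply]
  split
  · next h =>
    rw [Finset.sum_eq_single (⟨(j : ℕ) + 1, h⟩ : Fin n)]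
    · simp only [jordanBlock, Matrix.transpose_apply, Matrix.of_apply]
      rw [if_pos (by simp), mul_one]
    · intro k _ hk
      simp only [jordanBlock, Matrix.transpose_apply, Matrix.of_apply]
      rw [if_neg, mul_zero]
      intro hkj
      exact hk (Fin.ext (by simp; omega))
    · intro hmem; exact absurd (Finset.mem_univ _) hmem
  · next h =>
    apply Finset.sum_eq_zero
    intro k _
    have := k.isLt
    simp only [jordanBlock, Matrix.transpose_apply, Matrix.of_apply]
    rw [if_neg (by omega), mul_zero]

lemma jordanT_mul (M : Matrix (Fin n) (Fin n) ℝ) (i j : Fin n) :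
    ((jordanBlock n)ᵀ * M) i j =
      if h : 0 < (i : ℕ) then M ⟨(i : ℕ) - 1, by omega⟩ j else 0 := by
  rw [Matrix.mul_apply]
  split
  · next h =>
    rw [Finset.sum_eq_single (⟨(i : ℕ) - 1, by omega⟩ : Fin n)]
    · simp only [jordanBlock, Matrix.transpose_apply, Matrix.of_apply]
      rw [if_pos (by omega), one_mul]
    · intro k _ hk
      simp only [jordanBlock, Matrix.transpose_apply, Matrix.of_apply]
      rw [if_neg, zero_mul]
      intro hkj
      exact hk (Fin.ext (by simp; omega))
    · intro hmem; exact absurd (Finset.mem_univ _) hmem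
  · next h =>
    apply Finset.sum_eq_zero
    intro k _
    simp only [jordanBlock, Matrix.transpose_apply, Matrix.of_apply]
    rw [if_neg (by omega), zero_mul]

/-- A matrix constant along antidiagonals (in step form) is symmetric. -/
lemma symm_of_step (M : Matrix (Fin n) (Fin n) ℝ)
    (h : ∀ (i j : ℕ) (hi : i + 1 < n) (hj : j + 1 < n),
      M ⟨i, by omega⟩ ⟨j + 1, hj⟩ = M ⟨i + 1, hi⟩ ⟨j, by omega⟩) :
    ∀ i j : Fin n, M i j = M j i := by
  have claim : ∀ d (i j : ℕ) (hi : i < n) (hj : j < n), j = i + d →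
      M ⟨i, hi⟩ ⟨j, hj⟩ = M ⟨j, hj⟩ ⟨i, hi⟩ := by
    intro d
    induction d using Nat.strong_induction_on with
    | _ d IH =>
      intro i j hi hj hij
      rcases Nat.eq_zero_or_pos d with hd0 | hd0
      · subst hd0; simp_all
      · -- step from (i, j) to (i+1, j-1)
        have hi1 : i + 1 < n := by omega
        have hj1 : (j - 1) + 1 < n := by omega
        have e1 := h i (j - 1) hi1 hj1
        have ej : (⟨j - 1 + 1, hj1⟩ : Fin n) = ⟨j, hj⟩ := Fin.mk_eq_mk.mpr (by omega)
        rw [ej] at e1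
        rcases Nat.eq_or_lt_of_le (Nat.one_le_iff_ne_zero.mpr (by omega) : 1 ≤ d) with hd1 | hd2
        · -- d = 1 : e1 is already the goal
          have e2 : (⟨i + 1, hi1⟩ : Fin n) = ⟨j, hj⟩ := Fin.mk_eq_mk.mpr (by omega)
          have e3 : (⟨j - 1, by omega⟩ : Fin n) = ⟨i, hi⟩ := Fin.mk_eq_mk.mpr (by omega)
          rw [e1, e2, e3]
        · -- d ≥ 2
          have e4 := IH (d - 2) (by omega) (i + 1) (j - 1) hi1 (by omega) (by omega)
          have hj2 : (j - 1) + 1 < n := hj1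
          have e5 := h (j - 1) i hj2 hi1
          have ej2 : (⟨j - 1 + 1, hj2⟩ : Fin n) = ⟨j, hj⟩ := Fin.mk_eq_mk.mpr (by omega)
          rw [ej2] at e5
          rw [e1, e4, e5]
  intro i j
  rcases le_or_gt (i : ℕ) (j : ℕ) with hle | hlt
  · simpa using claim ((j : ℕ) - i) i j i.isLt j.isLt (by omega)
  · simpa using (claim ((i : ℕ) - j) j i j.isLt i.isLt (by omega)).symm

lemma strict_upper_nilpotent (A : Matrix (Fin n) (Fin n) ℝ)
    (h : ∀ i j : Fin n, (j : ℕ) ≤ (i : ℕ) → A i j = 0) : A ^ n = 0 := by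
  have key : ∀ k, ∀ i j : Fin n, (j : ℕ) < (i : ℕ) + k → (A ^ k) i j = 0 := by
    intro k
    induction k with
    | zero =>
      intro i j hij
      rw [pow_zero, Matrix.one_apply, if_neg]
      intro e; rw [e] at hij; omega
    | succ k IH =>
      intro i j hij
      rw [pow_succ, Matrix.mul_apply]
      apply Finset.sum_eq_zero
      intro m _
      by_cases hm : (m : ℕ) < (i : ℕ) + k
      · rw [IH i m hm, zero_mul]
      · rw [h m j (by omega), mul_zero]
  ext i j
  have := j.isLt
  rw [key n i j (by omega)]
  simp

lemma fromBlocks_diag_pow (A D : Matrix (Fin n) (Fin n) ℝ) (k : ℕ) :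
    (Matrix.fromBlocks A 0 0 D) ^ k = Matrix.fromBlocks (A ^ k) 0 0 (D ^ k) := by
  induction k with
  | zero => simp [Matrix.fromBlocks_one]
  | succ k IH =>
    rw [pow_succ, IH, pow_succ, pow_succ, Matrix.fromBlocks_multiply]
    simp

end helpers

/-- Any traceless element of g^σ commuting with d(J_n) is nilpotent:
the orbit of d(J_n) is distinguished. -/
theorem stmt5 (n : ℕ) (Y : Matrix (Fin n ⊕ Fin n) (Fin n ⊕ Fin n) ℝ)
    (h1 : Jmat n * Yᵀ * (Jmat n)⁻¹ = Y)
    (h2 : Y * dmat n (jordanBlock n) = dmat n (jordanBlock n) * Y)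
    (h3 : Y.trace = 0) :
    IsNilpotent Y := by
  rcases Nat.eq_zero_or_pos n with hn | hn
  · subst hn
    refine ⟨1, ?_⟩
    rw [pow_one]
    ext i j
    cases i with
    | inl a => exact a.elim0
    | inr a => exact a.elim0
  set N := jordanBlock n with hN
  set A := Y.toBlocks₁₁ with hA'
  set B := Y.toBlocks₁₂ with hB'
  set C := Y.toBlocks₂₁ with hC'
  set D := Y.toBlocks₂₂ with hD'
  have hY : Y = Matrix.fromBlocks A B C D := (Matrix.fromBlocks_toBlocks Y).symm
  have hJinv : (Jmat n)⁻¹ = Matrix.fromBlocks 0 (-1) 1 0 := by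
    apply Matrix.inv_eq_right_inv
    rw [Jmat, Matrix.fromBlocks_multiply]
    simp [Matrix.fromBlocks_one]
  rw [hY, hJinv, Jmat, Matrix.fromBlocks_transpose, Matrix.fromBlocks_multiply,
    Matrix.fromBlocks_multiply] at h1
  simp only [Matrix.zero_mul, Matrix.mul_zero, Matrix.one_mul, Matrix.mul_one,
    Matrix.neg_mul, Matrix.mul_neg, zero_add, add_zero, neg_neg, neg_zero] at h1
  rw [Matrix.fromBlocks_inj] at h1
  obtain ⟨hDA, hBB, hCC, hAD⟩ := h1
  rw [hY, dmat, Matrix.fromBlocks_multiply, Matrix.fromBlocks_multiply] at h2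
  simp only [Matrix.zero_mul, Matrix.mul_zero, zero_add, add_zero] at h2
  rw [Matrix.fromBlocks_inj] at h2
  obtain ⟨hA2, hB2, hC2, hD2⟩ := h2
  -- entrywise consequences
  have hA1 : ∀ (i j : ℕ) (hi : i + 1 < n) (hj : j + 1 < n),
      A ⟨i + 1, hi⟩ ⟨j + 1, hj⟩ = A ⟨i, by omega⟩ ⟨j, by omega⟩ := by
    intro i j hi hj
    have e := congrFun (congrFun hA2 ⟨i, by omega⟩) ⟨j + 1, hj⟩
    rw [mul_jordan, jordan_mul, dif_pos (by omega : 0 < j + 1), dif_pos hi] at e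
    exact e.symm
  have hA0 : ∀ (i : ℕ) (hi : i + 1 < n), A ⟨i + 1, hi⟩ ⟨0, hn⟩ = 0 := by
    intro i hi
    have e := congrFun (congrFun hA2 ⟨i, by omega⟩) ⟨0, hn⟩
    rw [mul_jordan, jordan_mul, dif_neg (by simp), dif_pos hi] at e
    exact e.symm
  -- B is symmetric hence zero
  have hBstep : ∀ (i j : ℕ) (hi : i + 1 < n) (hj : j + 1 < n),
      B ⟨i, by omega⟩ ⟨j + 1, hj⟩ = B ⟨i + 1, hi⟩ ⟨j, by omega⟩ := by
    intro i j hi hj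
    have e := congrFun (congrFun hB2 ⟨i, by omega⟩) ⟨j, by omega⟩
    rw [mul_jordanT, jordan_mul, dif_pos hj, dif_pos hi] at e
    exact e
  have hBsymm := symm_of_step B hBstep
  have hB0 : B = 0 := by
    ext i j
    have e1 : -(B j i) = B i j := congrFun (congrFun hBB i) j
    have e2 := hBsymm i j
    simp only [Matrix.zero_apply]
    linarith [e1, e2]
  -- C is symmetric hence zero
  have hCstep : ∀ (i j : ℕ) (hi : i + 1 < n) (hj : j + 1 < n),
      C ⟨i, by omega⟩ ⟨j + 1, hj⟩ = C ⟨i + 1, hi⟩ ⟨j, by omega⟩ := by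
    intro i j hi hj
    have e := congrFun (congrFun hC2 ⟨i + 1, hi⟩) ⟨j + 1, hj⟩
    rw [mul_jordan, jordanT_mul, dif_pos (by omega : 0 < j + 1),
      dif_pos (by omega : 0 < i + 1)] at e
    have ei : (⟨i + 1 - 1, by omega⟩ : Fin n) = ⟨i, by omega⟩ := Fin.mk_eq_mk.mpr (by omega)
    have ej : (⟨j + 1 - 1, by omega⟩ : Fin n) = ⟨j, by omega⟩ := Fin.mk_eq_mk.mpr (by omega)
    rw [ei, ej] at e
    exact e.symm
  have hCsymm := symm_of_step C hCstep
  have hC0 : C = 0 := by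
    ext i j
    have e1 : -(C j i) = C i j := congrFun (congrFun hCC i) j
    have e2 := hCsymm i j
    simp only [Matrix.zero_apply]
    linarith [e1, e2]
  -- D = Aᵀ and trace A = 0
  have hDeq : D = Aᵀ := hAD.symm
  have htr : Matrix.trace A = 0 := by
    rw [hY] at h3
    have : Matrix.trace (Matrix.fromBlocks A B C D) = Matrix.trace A + Matrix.trace D := by
      simp [Matrix.trace, Matrix.diag, Fintype.sum_sum_type, Matrix.fromBlocks]
    rw [this, hDeq, Matrix.trace_transpose] at h3
    linarith
  -- diagonal of A is constant, hence zero
  have hdiag : ∀ (m : ℕ) (hm : m < n), A ⟨m, hm⟩ ⟨m, hm⟩ = A ⟨0, hn⟩ ⟨0, hn⟩ := by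
    intro m
    induction m with
    | zero => intro hm; rfl
    | succ m IH =>
      intro hm
      rw [hA1 m m hm hm]
      exact IH (by omega)
  have hc0 : A ⟨0, hn⟩ ⟨0, hn⟩ = 0 := by
    have key : Matrix.trace A = (n : ℝ) * A ⟨0, hn⟩ ⟨0, hn⟩ := by
      rw [Matrix.trace]
      calc ∑ i, A.diag i = ∑ _i : Fin n, A ⟨0, hn⟩ ⟨0, hn⟩ :=
            Finset.sum_congr rfl (fun i _ => hdiag i.1 i.2)
        _ = (n : ℝ) * A ⟨0, hn⟩ ⟨0, hn⟩ := by
            rw [Finset.sum_const, Finset.card_univ, Fintype.card_fin, nsmul_eq_mul]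
    rw [htr] at key
    have hne : (n : ℝ) ≠ 0 := Nat.cast_ne_zero.mpr (by omega)
    rcases mul_eq_zero.mp key.symm with h | h
    · exact absurd h hne
    · exact h
  have hlow : ∀ (j i : ℕ) (hj : j < n) (hi : i < n), j ≤ i → A ⟨i, hi⟩ ⟨j, hj⟩ = 0 := by
    intro j
    induction j with
    | zero =>
      intro i hj hi _
      cases i with
      | zero => exact hc0
      | succ i' => exact hA0 i' hi
    | succ j IH =>
      intro i hj hi hji
      obtain ⟨i', rfl⟩ : ∃ i'', i = i'' + 1 := ⟨i - 1, by omega⟩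
      rw [hA1 i' j hi hj]
      exact IH i' (by omega) (by omega) (by omega)
  have hupper : ∀ i j : Fin n, (j : ℕ) ≤ (i : ℕ) → A i j = 0 := by
    intro i j hij
    exact hlow j i j.isLt i.isLt hij
  -- assemble
  have hYfin : Y = Matrix.fromBlocks A 0 0 Aᵀ := by
    rw [hY, hB0, hC0, hDeq]
  refine ⟨n, ?_⟩
  rw [hYfin, fromBlocks_diag_pow, strict_upper_nilpotent A hupper, ← Matrix.transpose_pow,
    strict_upper_nilpotent A hupper]
  simp
end

section
/- Let X ∈ gl_n(ℝ) be a nilpotent matrix which is not regular (i.e. its centralizer in gl_n(ℝ) has dimension strictly greater than n, equivalently X has at least two Jordan blocks). Then there exists a matrix Y ∈ gl_{2n}(ℝ) such that J Yᵀ J⁻¹ = Y, Y commutes with d(X) = diag(X, Xᵀ), tr(Y) = 0, and Y is not nilpotent. -/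
/-!
If `X` has a cyclic vector `v`, a matrix commuting with `X` is determined by its value at `v`, so
the centralizer of `X` has dimension at most `n`. Otherwise, by the structure theorem for the
finitely generated torsion `ℝ[X]`-module `ℝⁿ` on which `X` acts, `ℝⁿ` splits into at least two
nonzero `X`-stable summands, and the projection onto one of them is an idempotent `P ≠ 0, 1`
commuting with `X`. Then `A = P - (tr P / n) • 1` is traceless and commutes with `X`, and it is
not nilpotent because it acts on the image and on the kernel of `P` by the distinct scalars
`1 - tr P / n` and `- tr P / n`. Finally `Y = diag(A, Aᵀ)` lies in `g^σ` and commutes with `d(X)`.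
-/

open Matrix

open Polynomial

section Idempotent

variable {K A : Type*} [Field K] [Ring A] [Algebra K A]

theorem mul_pow_eq_pow_smul_of_mul_eq_smul {a b : A} {r : K} (h : a * b = r • a) (k : ℕ) :
    a * b ^ k = r ^ k • a := by
  induction k with
  | zero => simp
  | succ k ih => rw [pow_succ, ← mul_assoc, ih, smul_mul_assoc, h, smul_smul, pow_succ]

theorem IsIdempotentElem.not_isNilpotent_sub_smul_one {P : A} (hP : IsIdempotentElem P)
    (h0 : P ≠ 0) (h1 : P ≠ 1) (c : K) : ¬IsNilpotent (P - c • 1) := by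
  rintro ⟨k, hk⟩
  have eq_zero_of_mul_eq_smul {Q : A} {r : K} (hQ : Q ≠ 0) (h : Q * (P - c • 1) = r • Q) :
      r = 0 := by
    have := mul_pow_eq_pow_smul_of_mul_eq_smul h k
    rw [hk, mul_zero, eq_comm, smul_eq_zero] at this
    exact (pow_eq_zero_iff'.1 (this.resolve_right hQ)).1
  have h1c : 1 - c = 0 := eq_zero_of_mul_eq_smul h0 <| by
    rw [mul_sub, hP.eq, mul_smul_one, sub_smul, one_smul]
  have hc : -c = 0 := eq_zero_of_mul_eq_smul (sub_ne_zero.2 h1.symm) <| by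
    rw [sub_mul, mul_sub, mul_sub, hP.eq, one_mul, mul_smul_one, mul_smul_one, neg_smul, smul_sub]
    abel
  exact one_ne_zero (by linear_combination h1c - hc)

end Idempotent

namespace DirectSum

variable {R ι : Type*} [Semiring R] [DecidableEq ι] {M : ι → Type*}
  [∀ i, AddCommMonoid (M i)] [∀ i, Module R (M i)]

theorem isIdempotentElem_lof_comp_component (i : ι) :
    IsIdempotentElem (lof R ι M i ∘ₗ component R ι M i) :=
  LinearMap.ext fun x => by simp [Module.End.mul_apply]

theorem lof_comp_component_ne_zero {i : ι} [Nontrivial (M i)] :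
    lof R ι M i ∘ₗ component R ι M i ≠ 0 := by
  obtain ⟨x, hx⟩ := exists_ne (0 : M i)
  intro h
  have := congr(component R ι M i ($h (lof R ι M i x)))
  simp [hx] at this

theorem lof_comp_component_ne_one {i j : ι} (hij : i ≠ j) [Nontrivial (M j)] :
    lof R ι M i ∘ₗ component R ι M i ≠ 1 := by
  obtain ⟨x, hx⟩ := exists_ne (0 : M j)
  intro h
  have : 0 = x := by
    simpa [component.of, hij.symm] using congr(component R ι M j ($h (lof R ι M j x)))
  exact hx this.symm

theorem span_singleton_lof_eq_top {i : ι} (h : ∀ j, j ≠ i → Subsingleton (M j)) {v : M i}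
    (hv : Submodule.span R {v} = ⊤) : Submodule.span R {lof R ι M i v} = ⊤ := by
  refine eq_top_iff.2 fun x _ => ?_
  have hx : x = lof R ι M i (component R ι M i x) := by
    refine ext_component R fun j => ?_
    by_cases hj : j = i
    · subst hj
      rw [component.lof_self]
    · have := h j hj
      exact Subsingleton.elim _ _
  obtain ⟨r, hr⟩ :=
    Submodule.mem_span_singleton.1 (Submodule.eq_top_iff'.1 hv (component R ι M i x))
  rw [hx, ← hr, map_smul]
  exact Submodule.smul_mem _ _ (Submodule.mem_span_singleton_self _)

end DirectSum

theorem Submodule.Quotient.span_singleton_mk_one {R : Type*} [Ring R] (I : Submodule R R) :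
    Submodule.span R {(Submodule.Quotient.mk 1 : R ⧸ I)} = ⊤ := by
  refine eq_top_iff.2 fun x _ => ?_
  obtain ⟨r, rfl⟩ := Submodule.Quotient.mk_surjective _ x
  exact Submodule.mem_span_singleton.2
    ⟨r, by rw [← Submodule.Quotient.mk_smul, smul_eq_mul, mul_one]⟩

theorem Module.IsTorsion.exists_span_singleton_eq_top_or_exists_isIdempotentElem {R M : Type*}
    [CommRing R] [IsDomain R] [IsPrincipalIdealRing R] [AddCommGroup M] [Module R M]
    [Module.Finite R M] (hM : IsTorsion R M) :
    (∃ v : M, Submodule.span R {v} = ⊤) ∨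
      ∃ e : Module.End R M, IsIdempotentElem e ∧ e ≠ 0 ∧ e ≠ 1 := by
  classical
  obtain ⟨ι, _, p, -, k, ⟨L⟩⟩ := equiv_directSum_of_isTorsion hM
  let Q : ι → Type _ := fun i => R ⧸ R ∙ p i ^ k i
  by_cases hQ : ∃ i j, i ≠ j ∧ Nontrivial (Q i) ∧ Nontrivial (Q j)
  · obtain ⟨i, j, hij, hi, hj⟩ := hQ
    have hL := L.symm.conjRingEquiv.injective
    exact .inr ⟨_, (DirectSum.isIdempotentElem_lof_comp_component i).map L.symm.conjRingEquiv,
      (map_ne_zero_iff _ hL).2 DirectSum.lof_comp_component_ne_zero,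
      (map_ne_one_iff _ hL).2 (DirectSum.lof_comp_component_ne_one hij)⟩
  refine .inl ?_
  push Not at hQ
  by_cases hne : ∃ i, Nontrivial (Q i)
  · obtain ⟨i, hi⟩ := hne
    refine ⟨L.symm (DirectSum.lof R ι Q i (Submodule.Quotient.mk 1)), ?_⟩
    rw [← Set.image_singleton, ← LinearEquiv.coe_coe, ← Submodule.map_span,
      DirectSum.span_singleton_lof_eq_top (fun j hj => hQ i j hj.symm hi)
        (Submodule.Quotient.span_singleton_mk_one _),
      Submodule.map_top, LinearEquiv.range]
  · have (i : ι) : Subsingleton (Q i) := not_nontrivial_iff_subsingleton.1 (not_exists.1 hne i)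
    have : Subsingleton M := L.toEquiv.subsingleton
    exact ⟨0, Subsingleton.elim _ _⟩

section CyclicVector

variable (K : Type*) {A M : Type*} [CommSemiring K] [Semiring A] [Algebra K A]
  [AddCommMonoid M] [Module A M]

def IsCyclicVector (a : A) (v : M) : Prop :=
  ∀ w : M, ∃ q : K[X], aeval a q • v = w

variable {K} [Module K M] [IsScalarTower K A M]

theorem Module.AEval.isCyclicVector_of_span_eq_top {a : A} {v : M}
    (hv : Submodule.span K[X] {AEval.of K M a v} = ⊤) : IsCyclicVector K a v := by
  intro w
  obtain ⟨q, hq⟩ := Submodule.mem_span_singleton.1 (Submodule.eq_top_iff'.1 hv (AEval.of K M a w))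
  exact ⟨q, (AEval.of K M a).injective (by rw [AEval.of_aeval_smul, hq])⟩

end CyclicVector

theorem IsCyclicVector.finrank_centralizer_le {K A M : Type*} [Field K] [Ring A] [Algebra K A]
    [AddCommGroup M] [Module A M] [Module K M] [IsScalarTower K A M] [FaithfulSMul A M]
    [FiniteDimensional K M] {a : A} {v : M} (hv : IsCyclicVector K a v) :
    Module.finrank K (Subalgebra.centralizer K {a}) ≤ Module.finrank K M := by
  let evalAt : Subalgebra.centralizer K {a} →ₗ[K] M :=
    (LinearMap.toSpanSingleton A M v).restrictScalars K ∘ₗ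
      (Subalgebra.centralizer K {a}).val.toLinearMap
  refine LinearMap.finrank_le_finrank_of_injective (f := evalAt) <|
    (injective_iff_map_eq_zero _).2 fun ⟨b, hb⟩ hbv => Subtype.ext ?_
  change b • v = 0 at hbv
  have hab : a ∈ Subalgebra.centralizer K {b} := by
    simpa [Subalgebra.mem_centralizer_iff, eq_comm] using hb
  refine eq_of_smul_eq_smul (α := M) fun w => ?_
  obtain ⟨q, rfl⟩ := hv w
  have hq : aeval a q ∈ Subalgebra.centralizer K {b} :=
    coe_aeval_mk_apply (p := q) a hab ▸ SetLike.coe_mem _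
  change b • aeval a q • v = (0 : A) • aeval a q • v
  rw [smul_smul, (Subalgebra.mem_centralizer_iff K).1 hq b rfl, mul_smul, hbv, smul_zero,
    zero_smul]

namespace Module.AEval

section

variable {K A M : Type*} [CommSemiring K] [Semiring A] [Algebra K A]
  [AddCommMonoid M] [Module A M] [Module K M] [IsScalarTower K A M] (a : A)

noncomputable def restrictScalarsEnd : Module.End K[X] (AEval K M a) →+* Module.End K M where
  toFun e := (of K M a).symm.toLinearMap ∘ₗ e.restrictScalars K ∘ₗ (of K M a).toLinearMap
  map_one' := rfl
  map_mul' _ _ := by ext; simp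
  map_zero' := rfl
  map_add' _ _ := rfl

@[simp]
theorem restrictScalarsEnd_apply (e : Module.End K[X] (AEval K M a)) (m : M) :
    restrictScalarsEnd a e m = (of K M a).symm (e (of K M a m)) :=
  rfl

theorem restrictScalarsEnd_injective :
    Function.Injective (restrictScalarsEnd (K := K) (M := M) a) := by
  intro e e' h
  ext x
  simpa using congr(of K M a ($h ((of K M a).symm x)))

theorem restrictScalarsEnd_apply_smul (e : Module.End K[X] (AEval K M a)) (m : M) :
    restrictScalarsEnd a e (a • m) = a • restrictScalarsEnd a e m := by
  rw [restrictScalarsEnd_apply, restrictScalarsEnd_apply, ← X_smul_of, map_smul, of_symm_X_smul]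

end

theorem exists_isCyclicVector_or_exists_isIdempotentElem {K A M : Type*} [Field K] [Ring A]
    [Algebra K A] [FiniteDimensional K A] [AddCommGroup M] [Module A M] [Module K M]
    [IsScalarTower K A M] [FiniteDimensional K M] (a : A) :
    (∃ v : M, IsCyclicVector K a v) ∨
      ∃ g : Module.End K M, IsIdempotentElem g ∧ (∀ m, g (a • m) = a • g m) ∧ g ≠ 0 ∧ g ≠ 1 := by
  rcases IsTorsion.exists_span_singleton_eq_top_or_exists_isIdempotentElem
      (isTorsion_of_finiteDimensional K M a) with ⟨v, hv⟩ | ⟨e, he, he0, he1⟩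
  · exact .inl ⟨(of K M a).symm v, isCyclicVector_of_span_eq_top (by simpa using hv)⟩
  · have hinj := restrictScalarsEnd_injective (K := K) (M := M) a
    exact .inr ⟨_, he.map _, restrictScalarsEnd_apply_smul a e, (map_ne_zero_iff _ hinj).2 he0,
      (map_ne_one_iff _ hinj).2 he1⟩

end Module.AEval

namespace Matrix

variable {l m R K : Type*} [Fintype l] [Fintype m]

instance [DecidableEq m] [Semiring R] : FaithfulSMul (Matrix m m R) (m → R) :=
  ⟨ext_iff_smul.2⟩

theorem trace_fromBlocks [AddCommMonoid R] (A : Matrix l l R) (B : Matrix l m R)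
    (C : Matrix m l R) (D : Matrix m m R) : (fromBlocks A B C D).trace = A.trace + D.trace := by
  simp [trace, Fintype.sum_sum_type]

theorem isNilpotent_left_of_isNilpotent_fromBlocks [DecidableEq l] [DecidableEq m] [Semiring R]
    {A : Matrix l l R} {D : Matrix m m R} (h : IsNilpotent (fromBlocks A 0 0 D)) :
    IsNilpotent A := by
  obtain ⟨k, hk⟩ := h
  rw [fromBlocks_diagonal_pow, ← fromBlocks_zero] at hk
  exact ⟨k, (fromBlocks_inj.1 hk).1⟩

theorem commute_fromBlocks [Semiring R] {A X : Matrix l l R} {D Y : Matrix m m R}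
    (h₁ : Commute A X) (h₂ : Commute D Y) :
    Commute (fromBlocks A 0 0 D) (fromBlocks X 0 0 Y) := by
  simp [Commute, SemiconjBy, fromBlocks_multiply, h₁.eq, h₂.eq]

theorem commute_transpose [CommSemiring R] {A B : Matrix m m R} (h : Commute A B) :
    Commute Aᵀ Bᵀ := by
  simp only [Commute, SemiconjBy, ← transpose_mul, h.eq]

variable [DecidableEq m] [Field K]

theorem trace_sub_trace_div_card_smul_one [CharZero K] (M : Matrix m m K) :
    (M - (M.trace / Fintype.card m) • 1).trace = 0 := by
  rcases isEmpty_or_nonempty m with hm | hm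
  · simp [trace]
  · rw [trace_sub, trace_smul, trace_one, smul_eq_mul,
      div_mul_cancel₀ _ (Nat.cast_ne_zero.2 Fintype.card_ne_zero), sub_self]

theorem exists_isIdempotentElem_commute_of_card_lt_finrank_centralizer (X : Matrix m m K)
    (h : Fintype.card m < Module.finrank K (Subalgebra.centralizer K {X})) :
    ∃ P : Matrix m m K, IsIdempotentElem P ∧ Commute P X ∧ P ≠ 0 ∧ P ≠ 1 := by
  rcases Module.AEval.exists_isCyclicVector_or_exists_isIdempotentElem (K := K) (M := m → K) X
    with ⟨v, hv⟩ | ⟨g, hg, hgX, hg0, hg1⟩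
  · have := hv.finrank_centralizer_le
    rw [Module.finrank_fintype_fun_eq_card] at this
    omega
  · refine ⟨LinearMap.toMatrixAlgEquiv' g, hg.map _, ext_iff_mulVec.2 fun v => ?_,
      by simpa using hg0, by simpa using hg1⟩
    rw [← mulVec_mulVec, ← mulVec_mulVec]
    change LinearMap.toMatrix' g *ᵥ (X *ᵥ v) = X *ᵥ (LinearMap.toMatrix' g *ᵥ v)
    rw [LinearMap.toMatrix'_mulVec, LinearMap.toMatrix'_mulVec]
    exact hgX v

theorem exists_commute_trace_eq_zero_not_isNilpotent [CharZero K] (X : Matrix m m K)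
    (h : Fintype.card m < Module.finrank K (Subalgebra.centralizer K {X})) :
    ∃ A : Matrix m m K, Commute A X ∧ A.trace = 0 ∧ ¬IsNilpotent A := by
  obtain ⟨P, hP, hPX, hP0, hP1⟩ :=
    exists_isIdempotentElem_commute_of_card_lt_finrank_centralizer X h
  exact ⟨P - (P.trace / Fintype.card m) • 1, hPX.sub_left ((Commute.one_left X).smul_left _),
    trace_sub_trace_div_card_smul_one P, hP.not_isNilpotent_sub_smul_one hP0 hP1 _⟩

end Matrix

theorem Jmat_inv (n : ℕ) : (Jmat n)⁻¹ = -Jmat n :=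
  inv_eq_right_inv (by simp [Jmat, fromBlocks_multiply, fromBlocks_neg, ← fromBlocks_one])

theorem Jmat_mul_transpose_fromBlocks_mul_inv {n : ℕ} (A D : Matrix (Fin n) (Fin n) ℝ) :
    Jmat n * (fromBlocks A 0 0 D)ᵀ * (Jmat n)⁻¹ = fromBlocks Dᵀ 0 0 Aᵀ := by
  rw [Jmat_inv]
  simp [Jmat, fromBlocks_transpose, fromBlocks_multiply, fromBlocks_neg]

theorem stmt6_general (n : ℕ) (X : Matrix (Fin n) (Fin n) ℝ)
    (hreg : ∀ S : Submodule ℝ (Matrix (Fin n) (Fin n) ℝ),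
      (S : Set (Matrix (Fin n) (Fin n) ℝ)) = {Y | X * Y = Y * X} →
      n < Module.finrank ℝ S) :
    ∃ Y : Matrix (Fin n ⊕ Fin n) (Fin n ⊕ Fin n) ℝ,
      Jmat n * Yᵀ * (Jmat n)⁻¹ = Y ∧
      Y * dmat n X = dmat n X * Y ∧
      Y.trace = 0 ∧
      ¬ IsNilpotent Y := by
  have hcent := hreg (Subalgebra.centralizer ℝ {X}).toSubmodule <| by
    ext Y
    simp [Set.mem_centralizer_iff]
  obtain ⟨A, hAX, hA, hAnil⟩ :=
    exists_commute_trace_eq_zero_not_isNilpotent X (by rwa [Fintype.card_fin])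
  refine ⟨fromBlocks A 0 0 Aᵀ, ?_, commute_fromBlocks hAX (commute_transpose hAX), ?_,
    fun h => hAnil (isNilpotent_left_of_isNilpotent_fromBlocks h)⟩
  · rw [Jmat_mul_transpose_fromBlocks_mul_inv, transpose_transpose]
  · rw [trace_fromBlocks, trace_transpose, hA, add_zero]

/-- A non-regular nilpotent X (centralizer of dimension > n) yields a non-nilpotent
traceless element of g^σ commuting with d(X). -/
theorem stmt6 (n : ℕ) (X : Matrix (Fin n) (Fin n) ℝ) (hX : IsNilpotent X)
    (hreg : ∀ S : Submodule ℝ (Matrix (Fin n) (Fin n) ℝ),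
      (S : Set (Matrix (Fin n) (Fin n) ℝ)) = {Y | X * Y = Y * X} →
      n < Module.finrank ℝ S) :
    ∃ Y : Matrix (Fin n ⊕ Fin n) (Fin n ⊕ Fin n) ℝ,
      Jmat n * Yᵀ * (Jmat n)⁻¹ = Y ∧
      Y * dmat n X = dmat n X * Y ∧
      Y.trace = 0 ∧
      ¬ IsNilpotent Y :=
  stmt6_general n X hreg
end
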